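/- Let m ≥ 1 and let f₁, …, f_m : (Fin (m+1) → Bool) → Bool be monotone and self-dual Boolean functions of arity m+1. Then there exists a nonzero tuple a : Fin (m+1) → Bool (i.e., a ≠ fun _ => false) such that fⱼ a = false for all j = 1, …, m. -/
import Mathlib


theorem stmt_3 (m : ℕ) (hm : 1 ≤ m)
    (f : Fin m → ((Fin (m + 1) → Bool) → Bool))
    (hmono : ∀ j, ∀ x y : Fin (m + 1) → Bool, (∀ i, x i ≤ y i) → f j x ≤ f j y)
    (hsd : ∀ j, ∀ x : Fin (m + 1) → Bool, f j (fun i => !(x i)) = !(f j x)) :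
    ∃ a : Fin (m + 1) → Bool, a ≠ (fun _ => false) ∧ ∀ j, f j a = false := by
  set e : Fin (m + 1) → (Fin (m + 1) → Bool) := fun i k => decide (k = i) with he
  -- each f j is true on at most one unit vector
  have key : ∀ j, ∀ i i' : Fin (m + 1), i ≠ i' →
      f j (e i) = true → f j (e i') = true → False := by
    intro j i i' hne h1 h2
    have hdual : f j (fun k => !(e i k)) = false := by
      rw [hsd j (e i), h1]; rfl
    have hle : ∀ k, e i' k ≤ !(e i k) := by
      intro k
      by_cases hk : k = i'
      · subst hk
        simp [he, hne.symm]
      · simp [he, hk]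
    have := hmono j (e i') (fun k => !(e i k)) hle
    rw [h2, hdual] at this
    exact absurd this (by simp)
  by_contra hcon
  push_neg at hcon
  -- for every i, some j with f j (e i) = true
  have hall : ∀ i : Fin (m + 1), ∃ j, f j (e i) = true := by
    intro i
    have hne : e i ≠ (fun _ => false) := by
      intro h
      have := congrFun h i
      simp [he] at this
    obtain ⟨j, hj⟩ := hcon (e i) hne
    exact ⟨j, by simpa using hj⟩
  choose g hg using hall
  have hcard : Fintype.card (Fin m) < Fintype.card (Fin (m + 1)) := by simp
  obtain ⟨i, i', hne, heq⟩ := Fintype.exists_ne_map_eq_of_card_lt g hcard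
  exact key (g i) i i' hne (hg i) (heq ▸ hg i')
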